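/- arXiv:0708.1071 — 2 statements merged into one kernel-verified Lean document; each statement's English description precedes it below -/
import Mathlib

section
/- For q > 1, the class C_q is empty: there is no cdf F on [0, ∞) with F(0) = 0, finite positive mean μ, and F not identically 0 on (0,∞), such that μ⁻¹ ∫₀ˣ (1 - F(u)) du = F(qx) for all x ≥ 0. -/
/-!
Write `G = 1 - F` for the survival function and `T x = ∫_{x}^{∞} G`. Subtracting the defining
identity from `μ = ∫_0^∞ G` gives `T x = μ G (q x)`. Since `G` is nonincreasing, `T x` is at
least `(y - x) G y` for every `y ≥ x`. Taking `y = q x` bounds the support of `G` by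
`q μ / (q - 1)`; taking `y` in the support shows that `G (q x) > 0` whenever `x < y`. So the
supremum `b` of the support satisfies `q x ≤ b` for all `x < b`, which is impossible for `q > 1`
and `b > 0`.
-/

open MeasureTheory Real Set Filter

lemma not_bddAbove_of_forall_mul_mem {S : Set ℝ} {q y₀ : ℝ} (hq : 1 < q) (hy₀ : y₀ ∈ S)
    (hy₀_pos : 0 < y₀) (hS : ∀ y ∈ S, ∀ x, 0 < x → x < y → q * x ∈ S) :
    ¬ BddAbove S := by
  intro hbdd
  have hq_pos : 0 < q := zero_lt_one.trans hq
  set b := sSup S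
  have hb_pos : 0 < b := hy₀_pos.trans_le (le_csSup hbdd hy₀)
  obtain ⟨y, hyS, hby⟩ := exists_lt_of_lt_csSup ⟨y₀, hy₀⟩ (div_lt_self hb_pos hq)
  have hb_div_pos : 0 < b / q := div_pos hb_pos hq_pos
  have hb_lt : b < q * ((b / q + y) / 2) := by
    rw [div_lt_iff₀ hq_pos] at hby
    have : q * (b / q) = b := mul_div_cancel₀ b hq_pos.ne'
    nlinarith
  exact hb_lt.not_ge <| le_csSup hbdd <| hS y hyS _ (by linarith) (by linarith)

lemma mul_le_setIntegral_Ioi_of_antitoneOn {G : ℝ → ℝ} {x y : ℝ} (hxy : x ≤ y)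
    (hG : AntitoneOn G (Ioi x)) (hG_nonneg : ∀ u, x < u → 0 ≤ G u)
    (hG_int : IntegrableOn G (Ioi x)) :
    (y - x) * G y ≤ ∫ u in Ioi x, G u := by
  rcases hxy.eq_or_lt with rfl | hxy
  · simpa using setIntegral_nonneg measurableSet_Ioi hG_nonneg
  calc (y - x) * G y
      = G y * volume.real (Ioc x y) := by rw [volume_real_Ioc_of_le hxy.le, mul_comm]
    _ ≤ ∫ u in Ioc x y, G u :=
        setIntegral_ge_of_const_le_real measurableSet_Ioc measure_Ioc_lt_top.ne
          (fun u hu => hG hu.1 hxy hu.2) (hG_int.mono_set Ioc_subset_Ioi_self)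
    _ ≤ ∫ u in Ioi x, G u :=
        setIntegral_mono_set hG_int
          ((ae_restrict_mem measurableSet_Ioi).mono fun u hu => hG_nonneg u hu)
          Ioc_subset_Ioi_self.eventuallyLE

lemma setIntegral_Ioi_one_sub_eq {F : ℝ → ℝ} {μ q x : ℝ} (hx : 0 ≤ x)
    (hint : IntegrableOn (fun u => 1 - F u) (Ioi 0)) (hμ : μ = ∫ u in Ioi (0:ℝ), (1 - F u))
    (hμ_pos : 0 < μ) (heq : μ⁻¹ * ∫ u in (0:ℝ)..x, (1 - F u) = F (q * x)) :
    ∫ u in Ioi x, (1 - F u) = μ * (1 - F (q * x)) := by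
  have hsplit := intervalIntegral.integral_Ioi_sub_Ioi hint hx
  rw [← hμ, ← eq_inv_mul_iff_mul_eq₀ hμ_pos.ne' |>.mp heq.symm] at hsplit
  linarith

lemma sub_mul_one_sub_le_mul_one_sub {F : ℝ → ℝ} {μ q x y : ℝ} (hx : 0 ≤ x)
    (hxy : x ≤ y) (hmono : MonotoneOn F (Ici 0))
    (hF_le : ∀ u, 0 ≤ u → F u ≤ 1)
    (hint : IntegrableOn (fun u => 1 - F u) (Ioi 0)) (hμ : μ = ∫ u in Ioi (0:ℝ), (1 - F u))
    (hμ_pos : 0 < μ) (heq : μ⁻¹ * ∫ u in (0:ℝ)..x, (1 - F u) = F (q * x)) :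
    (y - x) * (1 - F y) ≤ μ * (1 - F (q * x)) := by
  rw [← setIntegral_Ioi_one_sub_eq hx hint hμ hμ_pos heq]
  have hIoi : Ioi x ⊆ Ici 0 := fun u hu => hx.trans hu.out.le
  refine mul_le_setIntegral_Ioi_of_antitoneOn hxy ?_ (fun u hu => ?_)
    (hint.mono_set (Ioi_subset_Ioi hx))
  · exact fun u hu v hv huv => sub_le_sub_left (hmono (hIoi hu) (hIoi hv) huv) 1
  · exact sub_nonneg.mpr (hF_le u (hIoi hu))

lemma bddAbove_setOf_lt_one {F : ℝ → ℝ} {μ q : ℝ} (hq : 1 < q)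
    (htail : ∀ x y, 0 ≤ x → x ≤ y → (y - x) * (1 - F y) ≤ μ * (1 - F (q * x))) :
    BddAbove {y | 0 ≤ y ∧ F y < 1} := by
  have hq_pos : 0 < q := zero_lt_one.trans hq
  refine ⟨q * μ / (q - 1), fun y ⟨hy, hFy⟩ => ?_⟩
  have h := htail (y / q) y (by positivity) (div_le_self hy hq.le)
  rw [mul_div_cancel₀ y hq_pos.ne'] at h
  have hμ_ge : y - y / q ≤ μ := le_of_mul_le_mul_right h (sub_pos.mpr hFy)
  rw [le_div_iff₀ (sub_pos.mpr hq)]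
  calc y * (q - 1) = q * (y - y / q) := by field_simp
    _ ≤ q * μ := by gcongr

lemma mul_mem_setOf_lt_one {F : ℝ → ℝ} {μ q x y : ℝ} (hq : 0 < q) (hμ : 0 ≤ μ)
    (htail : (y - x) * (1 - F y) ≤ μ * (1 - F (q * x))) (hx : 0 < x) (hxy : x < y)
    (hy : y ∈ {y | 0 ≤ y ∧ F y < 1}) : q * x ∈ {y | 0 ≤ y ∧ F y < 1} := by
  have hprod_pos := (mul_pos (sub_pos.mpr hxy) (sub_pos.mpr hy.2)).trans_le htail
  exact ⟨by positivity, sub_pos.mp (pos_of_mul_pos_right hprod_pos hμ)⟩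

/-- For `q > 1` the class `C_q` is empty: no cdf `F` on `[0,∞)` with `F 0 = 0`,
finite positive mean, not identically zero on `(0,∞)`, satisfies
`μ⁻¹ ∫₀ˣ (1 - F) = F (q x)` for all `x ≥ 0`. -/
theorem Cq_empty_of_one_lt (q : ℝ) (hq : 1 < q) :
    ¬ ∃ (F : ℝ → ℝ) (μ : ℝ),
      MonotoneOn F (Ici 0) ∧ F 0 = 0 ∧
      (∀ x, 0 ≤ x → 0 ≤ F x ∧ F x ≤ 1) ∧
      Tendsto F atTop (nhds 1) ∧
      IntegrableOn (fun u => 1 - F u) (Ioi 0) ∧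
      μ = (∫ u in Ioi (0:ℝ), (1 - F u)) ∧ 0 < μ ∧
      (∃ x, 0 < x ∧ 0 < F x) ∧
      (∀ x : ℝ, 0 ≤ x → μ⁻¹ * ∫ u in (0:ℝ)..x, (1 - F u) = F (q * x)) := by
  rintro ⟨F, μ, hmono, -, hF_bounds, -, hint, hμ, hμ_pos, -, heq⟩
  have hF_le : ∀ u, 0 ≤ u → F u ≤ 1 := fun u hu => (hF_bounds u hu).2
  have htail : ∀ x y, 0 ≤ x → x ≤ y → (y - x) * (1 - F y) ≤ μ * (1 - F (q * x)) :=
    fun x y hx hxy => sub_mul_one_sub_le_mul_one_sub hx hxy hmono hF_le hint hμ hμ_pos (heq x hx)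
  obtain ⟨y₀, hy₀_pos, hFy₀⟩ : ∃ y, 0 < y ∧ F y < 1 := by
    by_contra! h
    refine hμ_pos.ne' (hμ ▸ setIntegral_eq_zero_of_forall_eq_zero fun u hu => ?_)
    linarith [h u hu, hF_le u hu.out.le]
  exact not_bddAbove_of_forall_mul_mem (S := {y | 0 ≤ y ∧ F y < 1}) hq ⟨hy₀_pos.le, hFy₀⟩
    hy₀_pos (fun y hy x hx hxy => mul_mem_setOf_lt_one (zero_lt_one.trans hq) hμ_pos.le
      (htail x y hx.le hxy.le) hx hxy hy) (bddAbove_setOf_lt_one hq htail)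
end

section
/- EM monotonicity for the Poisson model: with L(λ) = Σ_d [ n_d log(Σ_b λ_b p_{bd}) − Σ_b λ_b p_{bd} ] and λ' the EM update of λ, one has L(λ') ≥ L(λ), assuming all λ_b > 0, Σ_d p_{bd} = 1 for all b, and Σ_b λ_b p_{bd} > 0 for all d with n_d > 0. -/
/-!
Write `S d = ∑ b, λ b * p b d` and `r d b = λ b * p b d / S d` for the posterior probability that
a count in bin `d` comes from source `b`, so that `λ' b = ∑ d, n d * r d b`. Since `∑ d, p b d = 1`,
`L(λ) = ∑ d, n d * log (S d) - ∑ b, λ b`. Jensen's inequality for the concave `log` with the weights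
`r d ·` gives `log (S' d / S d) ≥ ∑ b, r d b * log (λ' b / λ b)`; summing against `n d` turns the
right-hand side into `∑ b, λ' b * log (λ' b / λ b)`, which dominates `∑ b, (λ' b - λ b)` because
the Kullback–Leibler function `x log x + 1 - x` is nonnegative.
-/

open Real Finset

lemma sum_mul_log_le_log_sum_mul {ι : Type*} (s : Finset ι) {w x : ι → ℝ}
    (hw : ∀ i ∈ s, 0 ≤ w i) (hw₁ : ∑ i ∈ s, w i = 1) (hx : ∀ i ∈ s, w i ≠ 0 → 0 < x i) :
    ∑ i ∈ s, w i * log (x i) ≤ log (∑ i ∈ s, w i * x i) := by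
  classical
  have h_filter (f : ι → ℝ) :
      ∑ i ∈ s with w i ≠ 0, w i * f i = ∑ i ∈ s, w i * f i :=
    sum_filter_of_ne fun _ _ h => left_ne_zero_of_mul h
  have hw₁' : ∑ i ∈ s with w i ≠ 0, w i = 1 := by rwa [sum_filter_ne_zero]
  have := strictConcaveOn_log_Ioi.concaveOn.le_map_sum (fun i hi => hw i (mem_filter.1 hi).1) hw₁'
    fun i hi => Set.mem_Ioi.2 (hx i (mem_filter.1 hi).1 (mem_filter.1 hi).2)
  simpa only [smul_eq_mul, h_filter] using this

lemma sub_le_mul_log_div {x y : ℝ} (hx : 0 ≤ x) (hy : 0 < y) : x - y ≤ x * log (x / y) := by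
  have h := mul_nonneg hy.le (InformationTheory.klFun_nonneg (div_nonneg hx hy.le))
  rw [InformationTheory.klFun, mul_sub, mul_add, ← mul_assoc, mul_div_cancel₀ _ hy.ne',
    mul_one] at h
  linarith

noncomputable section PoissonEM

variable {B D : Type*} [Fintype B]

def responsibility (p : B → D → ℝ) (l : B → ℝ) (d : D) (b : B) : ℝ :=
  l b * p b d / ∑ b', l b' * p b' d

lemma responsibility_nonneg {p : B → D → ℝ} (hp : ∀ b d, 0 ≤ p b d) {l : B → ℝ}
    (hl : ∀ b, 0 ≤ l b) (d : D) (b : B) : 0 ≤ responsibility p l d b :=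
  div_nonneg (mul_nonneg (hl b) (hp b d)) (sum_nonneg fun b' _ => mul_nonneg (hl b') (hp b' d))

lemma sum_responsibility {p : B → D → ℝ} {l : B → ℝ} {d : D} (hS : 0 < ∑ b, l b * p b d) :
    ∑ b, responsibility p l d b = 1 := by
  simp_rw [responsibility, ← sum_div, div_self hS.ne']

variable [Fintype D] (p : B → D → ℝ) (n : D → ℝ)

def poissonLogLikelihood (l : B → ℝ) : ℝ :=
  ∑ d, (n d * log (∑ b, l b * p b d) - ∑ b, l b * p b d)

def emUpdate (l : B → ℝ) (b : B) : ℝ :=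
  l b * ∑ d, p b d * n d / ∑ b', l b' * p b' d

variable {p n}

lemma poissonLogLikelihood_eq (hpsum : ∀ b, ∑ d, p b d = 1) (l : B → ℝ) :
    poissonLogLikelihood p n l = ∑ d, n d * log (∑ b, l b * p b d) - ∑ b, l b := by
  rw [poissonLogLikelihood, sum_sub_distrib, sum_comm (f := fun d b => l b * p b d)]
  simp only [← mul_sum, hpsum, mul_one]

lemma emUpdate_eq_sum_mul_responsibility (l : B → ℝ) (b : B) :
    emUpdate p n l b = ∑ d, n d * responsibility p l d b := by
  rw [emUpdate, mul_sum]
  exact sum_congr rfl fun d _ => by rw [responsibility]; ring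

lemma sum_mul_sum_responsibility_mul (l : B → ℝ) (f : B → ℝ) :
    ∑ d, n d * ∑ b, responsibility p l d b * f b = ∑ b, emUpdate p n l b * f b := by
  simp only [emUpdate_eq_sum_mul_responsibility, mul_sum, sum_mul]
  rw [sum_comm]
  exact sum_congr rfl fun b _ => sum_congr rfl fun d _ => by ring

lemma emUpdate_nonneg (hp : ∀ b d, 0 ≤ p b d) (hn : ∀ d, 0 ≤ n d) {l : B → ℝ}
    (hl : ∀ b, 0 ≤ l b) (b : B) : 0 ≤ emUpdate p n l b := by
  rw [emUpdate_eq_sum_mul_responsibility]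
  exact sum_nonneg fun d _ => mul_nonneg (hn d) (responsibility_nonneg hp hl d b)

lemma emUpdate_pos (hp : ∀ b d, 0 ≤ p b d) (hn : ∀ d, 0 ≤ n d) {l : B → ℝ}
    (hl : ∀ b, 0 < l b) {b : B} {d : D} (hpbd : 0 < p b d) (hnd : 0 < n d)
    (hS : 0 < ∑ b', l b' * p b' d) : 0 < emUpdate p n l b := by
  rw [emUpdate_eq_sum_mul_responsibility]
  refine lt_of_lt_of_le ?_ (single_le_sum (fun d' _ =>
    mul_nonneg (hn d') (responsibility_nonneg hp (fun b => (hl b).le) d' b)) (mem_univ d))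
  exact mul_pos hnd (div_pos (mul_pos (hl b) hpbd) hS)

lemma sum_responsibility_mul_log_le (hp : ∀ b d, 0 ≤ p b d) (hn : ∀ d, 0 ≤ n d)
    {l : B → ℝ} (hl : ∀ b, 0 < l b) {d : D} (hnd : 0 < n d) (hS : 0 < ∑ b, l b * p b d) :
    ∑ b, responsibility p l d b * log (emUpdate p n l b / l b)
      ≤ log (∑ b, emUpdate p n l b * p b d) - log (∑ b, l b * p b d) := by
  have hl₀ (b : B) : 0 ≤ l b := (hl b).le
  have hpos_of_ne {b : B} (hr : responsibility p l d b ≠ 0) : 0 < p b d :=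
    (hp b d).lt_of_ne fun h => hr (by simp [responsibility, ← h])
  have hS' : 0 < ∑ b, emUpdate p n l b * p b d := by
    obtain ⟨b, -, hb⟩ := exists_lt_of_sum_lt (s := univ) (f := fun _ => 0)
      (g := fun b => l b * p b d) (by rwa [sum_const_zero])
    have hpbd : 0 < p b d := pos_of_mul_pos_right hb (hl₀ b)
    exact sum_pos' (fun b' _ => mul_nonneg (emUpdate_nonneg hp hn hl₀ b') (hp b' d))
      ⟨b, mem_univ b, mul_pos (emUpdate_pos hp hn hl hpbd hnd hS) hpbd⟩
  have h_mean : ∑ b, responsibility p l d b * (emUpdate p n l b / l b)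
      = (∑ b, emUpdate p n l b * p b d) / ∑ b, l b * p b d := by
    rw [sum_div]
    exact sum_congr rfl fun b _ => by
      rw [responsibility]; field_simp [(hl b).ne']
  rw [← log_div hS'.ne' hS.ne', ← h_mean]
  exact sum_mul_log_le_log_sum_mul univ (fun b _ => responsibility_nonneg hp hl₀ d b)
    (sum_responsibility hS) fun b _ hr =>
      div_pos (emUpdate_pos hp hn hl (hpos_of_ne hr) hnd hS) (hl b)

end PoissonEM

/-- EM monotonicity for the Poisson model: one EM step does not decrease the
log-likelihood `L(λ) = ∑ d, (n d * log (∑ b, λ b * p b d) − ∑ b, λ b * p b d)`. -/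
theorem em_update_increases_loglikelihood (B D : Type*) [Fintype B] [Fintype D]
    (p : B → D → ℝ) (hp : ∀ b d, 0 ≤ p b d) (hpsum : ∀ b, ∑ d, p b d = 1)
    (n : D → ℝ) (hn : ∀ d, 0 ≤ n d)
    (l : B → ℝ) (hl : ∀ b, 0 < l b)
    (hpos : ∀ d, 0 < n d → 0 < ∑ b, l b * p b d)
    (l' : B → ℝ)
    (hl' : ∀ b, l' b = l b * ∑ d, p b d * n d / (∑ b', l b' * p b' d)) :
    (∑ d, (n d * Real.log (∑ b, l b * p b d) - ∑ b, l b * p b d))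
      ≤ ∑ d, (n d * Real.log (∑ b, l' b * p b d) - ∑ b, l' b * p b d) := by
  obtain rfl : l' = emUpdate p n l := funext hl'
  have h_jensen (d : D) : n d * ∑ b, responsibility p l d b * log (emUpdate p n l b / l b)
      ≤ n d * (log (∑ b, emUpdate p n l b * p b d) - log (∑ b, l b * p b d)) := by
    rcases (hn d).eq_or_lt with hnd | hnd
    · simp [← hnd]
    · exact mul_le_mul_of_nonneg_left
        (sum_responsibility_mul_log_le hp hn hl hnd (hpos d hnd)) hnd.le
  have h_gibbs : ∑ b, emUpdate p n l b - ∑ b, l b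
      ≤ ∑ b, emUpdate p n l b * log (emUpdate p n l b / l b) := by
    rw [← sum_sub_distrib]
    exact sum_le_sum fun b _ =>
      sub_le_mul_log_div (emUpdate_nonneg hp hn (fun b => (hl b).le) b) (hl b)
  have h_sum := sum_le_sum fun d (_ : d ∈ univ) => h_jensen d
  rw [sum_mul_sum_responsibility_mul] at h_sum
  simp only [mul_sub, sum_sub_distrib] at h_sum
  change poissonLogLikelihood p n l ≤ poissonLogLikelihood p n (emUpdate p n l)
  rw [poissonLogLikelihood_eq hpsum, poissonLogLikelihood_eq hpsum]
  linarith
end
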